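/- The function F(x,λ,α,β,γ) = -x^3 + βx - (λ+x)^2 - γ(λ+x)x - α has a winged cusp singularity at x = 1/3, λ = 0 with parameter values α = -1/27, β = -1/3, γ = -2; that is, at this point F = F_x = F_λ = F_xx = F_xλ = F_λλ = 0, while F_xxx ≠ 0 and the 2×2 Hessian degeneracy conditions of the winged cusp hold. -/

import Mathlib

/-! At these parameter values `F` collapses to `-(x - 1/3)³ - λ²`, the normal form of the
winged cusp translated to `x = 1/3`. Its `x`-section at `λ = 0` and its `λ`-section at
`x = 1/3` are then single monomials centred at the singular point, whose derivatives of every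
order can be read off directly. -/

lemma deriv_mul_sub_pow_succ (c a : ℝ) (n : ℕ) :
    deriv (fun x => c * (x - a) ^ (n + 1)) = fun x => c * (n + 1) * (x - a) ^ n := by
  funext x
  have h := ((((hasDerivAt_id x).sub_const a).fun_pow (n + 1)).const_mul c).deriv
  simp only [id_eq, Nat.add_sub_cancel, mul_one] at h
  rw [h]
  push_cast
  ring

/-- The fixed-point map `F(x,λ,α,β,γ) = -x³ + βx - (λ+x)² - γ(λ+x)x - α` has a winged
cusp singularity at `x = 1/3`, `λ = 0`, `α = -1/27`, `β = -1/3`, `γ = -2`: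
`F = F_x = F_λ = F_xx = F_xλ = 0` there, while `F_xxx ≠ 0` and `F_λλ ≠ 0`
(the winged-cusp nondegeneracy conditions). -/
theorem fixed_point_map_winged_cusp (F : ℝ → ℝ → ℝ → ℝ → ℝ → ℝ)
    (hF : F = fun x lam α β γ =>
      -x ^ 3 + β * x - (lam + x) ^ 2 - γ * (lam + x) * x - α) :
    F (1/3) 0 (-1/27) (-1/3) (-2) = 0 ∧
    deriv (fun x => F x 0 (-1/27) (-1/3) (-2)) (1/3) = 0 ∧
    deriv (fun lam => F (1/3) lam (-1/27) (-1/3) (-2)) 0 = 0 ∧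
    deriv (deriv (fun x => F x 0 (-1/27) (-1/3) (-2))) (1/3) = 0 ∧
    deriv (fun lam => deriv (fun x => F x lam (-1/27) (-1/3) (-2)) (1/3)) 0 = 0 ∧
    deriv (deriv (deriv (fun x => F x 0 (-1/27) (-1/3) (-2)))) (1/3) ≠ 0 ∧
    deriv (deriv (fun lam => F (1/3) lam (-1/27) (-1/3) (-2))) 0 ≠ 0 := by
  have h_normal_form (x lam : ℝ) :
      F x lam (-1/27) (-1/3) (-2) = -1 * (x - 1/3) ^ (2 + 1) + -lam ^ 2 := by
    subst hF; ring
  have h_x_section :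
      (fun x => F x 0 (-1/27) (-1/3) (-2)) = fun x => -1 * (x - 1/3) ^ (2 + 1) := by
    funext x; rw [h_normal_form]; ring
  have h_lam_section :
      (fun lam => F (1/3) lam (-1/27) (-1/3) (-2)) = fun lam => -1 * (lam - 0) ^ (1 + 1) := by
    funext lam; rw [h_normal_form]; ring
  have h_mixed (lam : ℝ) : deriv (fun x => F x lam (-1/27) (-1/3) (-2)) (1/3) = 0 := by
    simp only [h_normal_form, deriv_add_const, deriv_mul_sub_pow_succ]; norm_num
  refine ⟨by rw [h_normal_form]; norm_num, ?_, ?_, ?_, ?_, ?_, ?_⟩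
  · rw [h_x_section, deriv_mul_sub_pow_succ]; norm_num
  · rw [h_lam_section, deriv_mul_sub_pow_succ]; norm_num
  · rw [h_x_section, deriv_mul_sub_pow_succ, deriv_mul_sub_pow_succ]; norm_num
  · simp only [h_mixed, deriv_const]
  · rw [h_x_section, deriv_mul_sub_pow_succ, deriv_mul_sub_pow_succ, deriv_mul_sub_pow_succ]
    norm_num
  · rw [h_lam_section, deriv_mul_sub_pow_succ, deriv_mul_sub_pow_succ]; norm_num
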